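/- arXiv:1712.03234 — 2 statements merged into one kernel-verified Lean document; each statement's English description precedes it below -/
import Mathlib

section
/- Let Λ be a locally convex row-finite k-graph with desourcification Λ̄, and let x ∈ Λ^{≤∞} be a boundary path. Then x is cofinal in Λ if and only if the infinite path [x;(0,∞)] is cofinal in Λ̄. -/
/-!
Common definitions: higher-rank graphs (`k`-graphs), boundary paths, the
equivalence relation `∼_Λ`, the periodicity group `Per(Λ)`, maximal tails,
hereditary/saturated sets, and (an axiomatization of) the Farthing
desourcification `Λ̄` of a locally convex row-finite `k`-graph `Λ`.
-/

/-- A `k`-graph: a countable small category `Λ` equipped with a degree functor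
`d : Λ → ℕ^k` satisfying the factorization property.  Elements of `Path` are
the morphisms ("paths"); the vertices are the identity morphisms (the paths `v`
with `r v = v`, equivalently of degree `0`).  The composition `comp μ ν` is
only meaningful when `s μ = r ν`. -/
structure KGraph (k : ℕ) where
  Path : Type
  countable_path : Countable Path
  nonempty_path : Nonempty Path
  r : Path → Path
  s : Path → Path
  d : Path → Fin k → ℕ
  comp : Path → Path → Path
  d_r : ∀ μ, d (r μ) = 0
  d_s : ∀ μ, d (s μ) = 0
  r_r : ∀ μ, r (r μ) = r μ
  s_r : ∀ μ, s (r μ) = r μ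
  r_s : ∀ μ, r (s μ) = s μ
  s_s : ∀ μ, s (s μ) = s μ
  comp_id : ∀ μ, comp μ (s μ) = μ
  id_comp : ∀ μ, comp (r μ) μ = μ
  r_comp : ∀ μ ν, s μ = r ν → r (comp μ ν) = r μ
  s_comp : ∀ μ ν, s μ = r ν → s (comp μ ν) = s ν
  d_comp : ∀ μ ν, s μ = r ν → d (comp μ ν) = d μ + d ν
  comp_assoc : ∀ μ ν ρ, s μ = r ν → s ν = r ρ →
    comp (comp μ ν) ρ = comp μ (comp ν ρ)
  factorization : ∀ (lam : Path) (m n : Fin k → ℕ), d lam = m + n →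
    ∃! p : Path × Path, d p.1 = m ∧ d p.2 = n ∧ s p.1 = r p.2 ∧ lam = comp p.1 p.2

namespace KGraph

variable {k : ℕ}

/-- The vertices of a `k`-graph are its identity morphisms. -/
def IsVertex (Λ : KGraph k) (v : Λ.Path) : Prop := Λ.r v = v

/-- `Λ.boundedPaths n` is the set `Λ^{≤ n}`: paths `λ` with `d λ ≤ n` such that
`d(λ)_i < n_i` implies `s(λ)Λ^{e_i} = ∅`. -/
def boundedPaths (Λ : KGraph k) (n : Fin k → ℕ) : Set Λ.Path :=
  {lam | Λ.d lam ≤ n ∧ ∀ i : Fin k, Λ.d lam i < n i →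
    ∀ e, Λ.r e = Λ.s lam → Λ.d e ≠ Pi.single i 1}

/-- `Λ` is row-finite if every `vΛ^n` is finite. -/
def RowFinite (Λ : KGraph k) : Prop :=
  ∀ (v : Λ.Path) (n : Fin k → ℕ), Λ.IsVertex v →
    {lam | Λ.r lam = v ∧ Λ.d lam = n}.Finite

/-- `Λ` is locally convex if for `i ≠ j`, `λ ∈ vΛ^{e_i}` and `μ ∈ vΛ^{e_j}`
one has `s(λ)Λ^{e_j} ≠ ∅` (by symmetry in `i, j` this also gives
`s(μ)Λ^{e_i} ≠ ∅`). -/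
def LocallyConvex (Λ : KGraph k) : Prop :=
  ∀ i j : Fin k, i ≠ j → ∀ lam mu : Λ.Path, Λ.r lam = Λ.r mu →
    Λ.d lam = Pi.single i 1 → Λ.d mu = Pi.single j 1 →
    ∃ lam', Λ.r lam' = Λ.s lam ∧ Λ.d lam' = Pi.single j 1

end KGraph

/-- A boundary path of `Λ`: a degree-preserving functor `x : Ω_{k,m} → Λ`
(`m = deg ∈ (ℕ ∪ {∞})^k`) such that `p ≤ m` and `p_i = m_i` imply
`x(p)Λ^{e_i} = ∅`.  `seg p q` is the path `x(p,q)`, meaningful for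
`p ≤ q ≤ deg`; `seg p p` is the vertex `x(p)`. -/
structure BoundaryPath {k : ℕ} (Λ : KGraph k) where
  deg : Fin k → ℕ∞
  seg : (Fin k → ℕ) → (Fin k → ℕ) → Λ.Path
  seg_d : ∀ p q : Fin k → ℕ, p ≤ q → (∀ i, (q i : ℕ∞) ≤ deg i) →
    Λ.d (seg p q) = q - p
  seg_r : ∀ p q : Fin k → ℕ, p ≤ q → (∀ i, (q i : ℕ∞) ≤ deg i) →
    Λ.r (seg p q) = seg p p
  seg_s : ∀ p q : Fin k → ℕ, p ≤ q → (∀ i, (q i : ℕ∞) ≤ deg i) →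
    Λ.s (seg p q) = seg q q
  seg_comp : ∀ p q t : Fin k → ℕ, p ≤ q → q ≤ t → (∀ i, (t i : ℕ∞) ≤ deg i) →
    Λ.comp (seg p q) (seg q t) = seg p t
  boundary : ∀ p : Fin k → ℕ, (∀ i, (p i : ℕ∞) ≤ deg i) →
    ∀ i : Fin k, (p i : ℕ∞) = deg i →
      ∀ e, Λ.r e = seg p p → Λ.d e ≠ Pi.single i 1

/-- `emin m e` is the coordinatewise minimum `m ∧ e` of `m ∈ ℕ^k` with the
(possibly infinite) degree `e ∈ (ℕ ∪ {∞})^k`, as an element of `ℕ^k`. -/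
noncomputable def emin {k : ℕ} (m : Fin k → ℕ) (e : Fin k → ℕ∞) : Fin k → ℕ :=
  fun i => (min ((m i : ℕ∞)) (e i)).toNat

/-- Equality of boundary paths (of the same degree), as functors. -/
def BPEq {k : ℕ} {Λ : KGraph k} (x y : BoundaryPath Λ) : Prop :=
  x.deg = y.deg ∧ ∀ p q : Fin k → ℕ, p ≤ q → (∀ i, (q i : ℕ∞) ≤ x.deg i) →
    x.seg p q = y.seg p q

/-- `IsExtension Λ lam x y` says that `y = lam · x` is the (unique) boundary
path with `y(0, d lam) = lam` and `y(d lam, d lam + p) = x(0, p)`. -/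
def IsExtension {k : ℕ} (Λ : KGraph k) (lam : Λ.Path) (x y : BoundaryPath Λ) :
    Prop :=
  (∀ i, y.deg i = (Λ.d lam i : ℕ∞) + x.deg i) ∧
  y.seg 0 (Λ.d lam) = lam ∧
  ∀ p : Fin k → ℕ, (∀ i, (p i : ℕ∞) ≤ x.deg i) →
    y.seg (Λ.d lam) (Λ.d lam + p) = x.seg 0 p

/-- The relation `μ ∼_Λ ν`: `s μ = s ν` and `μx = νx` for every boundary path
`x ∈ s(μ)Λ^{≤∞}`. -/
def KGraph.peq {k : ℕ} (Λ : KGraph k) (μ ν : Λ.Path) : Prop :=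
  Λ.s μ = Λ.s ν ∧ ∀ x y z : BoundaryPath Λ, x.seg 0 0 = Λ.s μ →
    IsExtension Λ μ x y → IsExtension Λ ν x z → BPEq y z

/-- `Per(Λ) = {d μ - d ν : μ ∼_Λ ν} ⊆ ℤ^k`. -/
def KGraph.Per {k : ℕ} (Λ : KGraph k) : Set (Fin k → ℤ) :=
  {g | ∃ μ ν : Λ.Path, Λ.peq μ ν ∧ g = fun i => (Λ.d μ i : ℤ) - (Λ.d ν i : ℤ)}

/-- `Λ` is aperiodic if for every vertex `v` there is a boundary path
`x ∈ vΛ^{≤∞}` such that distinct `μ, ν ∈ Λv` have `μx ≠ νx`. -/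
def KGraph.Aperiodic {k : ℕ} (Λ : KGraph k) : Prop :=
  ∀ v : Λ.Path, Λ.IsVertex v → ∃ x : BoundaryPath Λ, x.seg 0 0 = v ∧
    ∀ μ ν : Λ.Path, Λ.s μ = v → Λ.s ν = v → μ ≠ ν →
      ∀ y z : BoundaryPath Λ, IsExtension Λ μ x y → IsExtension Λ ν x z →
        ¬ BPEq y z

/-- A maximal tail: a nonempty set `T` of vertices such that (1) `s λ ∈ T`
implies `r λ ∈ T`; (2) for `v ∈ T` and `n ∈ ℕ^k` there is `λ ∈ vΛ^{≤n}` with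
`s λ ∈ T`; (3) any `v, w ∈ T` are connected via `μ ∈ vΛ`, `ν ∈ wΛ` with
`s μ = s ν`. -/
def KGraph.IsMaximalTail {k : ℕ} (Λ : KGraph k) (T : Set Λ.Path) : Prop :=
  T.Nonempty ∧ (∀ v ∈ T, Λ.IsVertex v) ∧
  (∀ lam : Λ.Path, Λ.s lam ∈ T → Λ.r lam ∈ T) ∧
  (∀ v ∈ T, ∀ n : Fin k → ℕ,
    ∃ lam ∈ Λ.boundedPaths n, Λ.r lam = v ∧ Λ.s lam ∈ T) ∧
  (∀ v ∈ T, ∀ w ∈ T, ∃ μ ν : Λ.Path, Λ.r μ = v ∧ Λ.r ν = w ∧ Λ.s μ = Λ.s ν)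

/-- `H_{Per(Λ)}`: the set of vertices `v` such that for all `μ ∈ vΛ` and
`m ∈ ℕ^k` with `d μ - m ∈ Per(Λ)` there exists `ν ∈ vΛ^m` with `μ ∼_Λ ν`. -/
def KGraph.HPer {k : ℕ} (Λ : KGraph k) : Set Λ.Path :=
  {v | Λ.IsVertex v ∧ ∀ μ : Λ.Path, Λ.r μ = v → ∀ m : Fin k → ℕ,
    (fun i => (Λ.d μ i : ℤ) - (m i : ℤ)) ∈ Λ.Per →
    ∃ ν : Λ.Path, Λ.r ν = v ∧ Λ.d ν = m ∧ Λ.peq μ ν}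

/-- A set of vertices `H` is hereditary if `r λ ∈ H` implies `s λ ∈ H`. -/
def KGraph.Hereditary {k : ℕ} (Λ : KGraph k) (H : Set Λ.Path) : Prop :=
  ∀ lam : Λ.Path, Λ.r lam ∈ H → Λ.s lam ∈ H

/-- A set of vertices `H` is saturated if `s(vΛ^{≤n}) ⊆ H` for some `n ∈ ℕ^k`
implies `v ∈ H`. -/
def KGraph.Saturated {k : ℕ} (Λ : KGraph k) (H : Set Λ.Path) : Prop :=
  ∀ v : Λ.Path, Λ.IsVertex v →
    (∃ n : Fin k → ℕ, ∀ lam ∈ Λ.boundedPaths n, Λ.r lam = v → Λ.s lam ∈ H) →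
    v ∈ H

/-- `Σ(H)`: the smallest saturated set containing `H`. -/
def KGraph.SatClosure {k : ℕ} (Λ : KGraph k) (H : Set Λ.Path) : Set Λ.Path :=
  ⋂₀ {S : Set Λ.Path | H ⊆ S ∧ Λ.Saturated S}

/-- A boundary path `x` is cofinal if every vertex `v` admits `n ≤ d x` with
`vΛx(n) ≠ ∅`. -/
def KGraph.CofinalBP {k : ℕ} (Λ : KGraph k) (x : BoundaryPath Λ) : Prop :=
  ∀ v : Λ.Path, Λ.IsVertex v → ∃ n : Fin k → ℕ,
    (∀ i, (n i : ℕ∞) ≤ x.deg i) ∧ ∃ μ : Λ.Path, Λ.r μ = v ∧ Λ.s μ = x.seg n n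

/-- `Λ` is cofinal if all of its boundary paths are cofinal. -/
def KGraph.Cofinal {k : ℕ} (Λ : KGraph k) : Prop :=
  ∀ x : BoundaryPath Λ, Λ.CofinalBP x

/-- `T(v) = {s μ : μ ∈ vΛ}`, the smallest hereditary set containing `v`. -/
def KGraph.tree {k : ℕ} (Λ : KGraph k) (v : Λ.Path) : Set Λ.Path :=
  {w | ∃ μ : Λ.Path, Λ.r μ = v ∧ Λ.s μ = w}

/-- `Δ(H₁,H₂) = {v ∈ H₁ : T(v) ∩ H₂ = ∅}`. -/
def KGraph.Delta {k : ℕ} (Λ : KGraph k) (H₁ H₂ : Set Λ.Path) : Set Λ.Path :=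
  {v ∈ H₁ | Λ.tree v ∩ H₂ = ∅}

/-- `Ω(H₁,H₂) = {v ∈ H₁ \ H₂ : T(v) ∩ H₂ ≠ ∅}`. -/
def KGraph.Omega {k : ℕ} (Λ : KGraph k) (H₁ H₂ : Set Λ.Path) : Set Λ.Path :=
  {v ∈ H₁ \ H₂ | (Λ.tree v ∩ H₂).Nonempty}

/-- The relation `H₁ ≻ H₂`. -/
def KGraph.Succ {k : ℕ} (Λ : KGraph k) (H₁ H₂ : Set Λ.Path) : Prop :=
  H₂ ⊆ H₁ ∧ (Λ.Delta H₁ H₂).Nonempty ∧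
  ∀ v ∈ Λ.Omega H₁ H₂, ∃ n : Fin k → ℕ,
    ∀ lam ∈ Λ.boundedPaths n, Λ.r lam = v → Λ.s lam ∈ H₂ ∪ Λ.Delta H₁ H₂

/-- `IsGlue Λ x n y p z` says that `z` is the boundary path
`x(0, n ∧ d x) · σ^{p ∧ d y}(y)`. -/
def IsGlue {k : ℕ} (Λ : KGraph k) (x : BoundaryPath Λ) (n : Fin k → ℕ)
    (y : BoundaryPath Λ) (p : Fin k → ℕ) (z : BoundaryPath Λ) : Prop :=
  (∀ i, z.deg i = (emin n x.deg i : ℕ∞) + (y.deg i - (emin p y.deg i : ℕ∞))) ∧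
  z.seg 0 (emin n x.deg) = x.seg 0 (emin n x.deg) ∧
  ∀ t : Fin k → ℕ, (∀ i, ((emin p y.deg i + t i : ℕ) : ℕ∞) ≤ y.deg i) →
    z.seg (emin n x.deg) (emin n x.deg + t) =
      y.seg (emin p y.deg) (emin p y.deg + t)

/-- The Farthing desourcification `Λ̄ = P_Λ/≈` of `Λ`: a `k`-graph `bar`
without sources whose morphisms are the classes `cls x m n = [x;(m,n)]`
(`x ∈ Λ^{≤∞}`, `m ≤ n ∈ ℕ^k`), where `[x;(m,n)] = [y;(p,q)]` iff
(P1) `x(m ∧ d x, n ∧ d x) = y(p ∧ d y, q ∧ d y)`,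
(P2) `m - m ∧ d x = p - p ∧ d y` and (P3) `n - m = q - p`; together with the
range, source, degree and composition formulas, the canonical embedding
`emb : Λ → Λ̄` (`λ ↦ [λx;(0, d λ)]`) and the projection `proj = π : Λ̄ → Λ`,
`π [x;(m,n)] = [x;(m ∧ d x, n ∧ d x)]`. -/
structure Desourcification {k : ℕ} (Λ : KGraph k) where
  bar : KGraph k
  noSources : ∀ v : bar.Path, bar.IsVertex v → ∀ i : Fin k,
    ∃ e, bar.r e = v ∧ bar.d e = Pi.single i 1
  cls : BoundaryPath Λ → (Fin k → ℕ) → (Fin k → ℕ) → bar.Path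
  cls_surjective : ∀ μ : bar.Path,
    ∃ (x : BoundaryPath Λ) (m : Fin k → ℕ), μ = cls x m (m + bar.d μ)
  cls_eq_iff : ∀ (x : BoundaryPath Λ) (m n : Fin k → ℕ) (y : BoundaryPath Λ)
    (p q : Fin k → ℕ), m ≤ n → p ≤ q →
    (cls x m n = cls y p q ↔
      (x.seg (emin m x.deg) (emin n x.deg) =
          y.seg (emin p y.deg) (emin q y.deg) ∧
        m - emin m x.deg = p - emin p y.deg ∧
        n - m = q - p))
  d_cls : ∀ (x : BoundaryPath Λ) (m n : Fin k → ℕ), m ≤ n →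
    bar.d (cls x m n) = n - m
  r_cls : ∀ (x : BoundaryPath Λ) (m n : Fin k → ℕ), m ≤ n →
    bar.r (cls x m n) = cls x m m
  s_cls : ∀ (x : BoundaryPath Λ) (m n : Fin k → ℕ), m ≤ n →
    bar.s (cls x m n) = cls x n n
  comp_cls : ∀ (x y : BoundaryPath Λ) (m n p q : Fin k → ℕ), m ≤ n → p ≤ q →
    bar.s (cls x m n) = bar.r (cls y p q) →
    ∀ z : BoundaryPath Λ, IsGlue Λ x n y p z →
      bar.comp (cls x m n) (cls y p q) = cls z m (n + (q - p))
  emb : Λ.Path → bar.Path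
  emb_injective : Function.Injective emb
  emb_r : ∀ lam : Λ.Path, emb (Λ.r lam) = bar.r (emb lam)
  emb_s : ∀ lam : Λ.Path, emb (Λ.s lam) = bar.s (emb lam)
  emb_d : ∀ lam : Λ.Path, bar.d (emb lam) = Λ.d lam
  emb_comp : ∀ μ ν : Λ.Path, Λ.s μ = Λ.r ν →
    emb (Λ.comp μ ν) = bar.comp (emb μ) (emb ν)
  emb_cls : ∀ (lam : Λ.Path) (x y : BoundaryPath Λ), x.seg 0 0 = Λ.s lam →
    IsExtension Λ lam x y → emb lam = cls y 0 (Λ.d lam)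
  proj : bar.Path → Λ.Path
  proj_cls : ∀ (x : BoundaryPath Λ) (m n : Fin k → ℕ), m ≤ n →
    proj (cls x m n) = x.seg (emin m x.deg) (emin n x.deg)

/-- `IsInfClass D x p z` says that `z` is the infinite path `[x;(p,∞)]` of
`Λ̄`, i.e. `z(m,n) = [x;(p+m, p+n)]`. -/
def IsInfClass {k : ℕ} {Λ : KGraph k} (D : Desourcification Λ)
    (x : BoundaryPath Λ) (p : Fin k → ℕ) (z : BoundaryPath D.bar) : Prop :=
  (∀ i, z.deg i = (⊤ : ℕ∞)) ∧
  ∀ m n : Fin k → ℕ, m ≤ n → z.seg m n = D.cls x (p + m) (p + n)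

/-- `IsShift x n y` says that `y = σ^n(x)` is the `n`-shifted boundary path,
`σ^n(x)(p,q) = x(p+n, q+n)`, of degree `d x - n`. -/
def IsShift {k : ℕ} {Λ : KGraph k} (x : BoundaryPath Λ) (n : Fin k → ℕ)
    (y : BoundaryPath Λ) : Prop :=
  (∀ i, y.deg i = x.deg i - (n i : ℕ∞)) ∧
  ∀ p q : Fin k → ℕ, p ≤ q → (∀ i, (q i : ℕ∞) ≤ y.deg i) →
    y.seg p q = x.seg (p + n) (q + n)

/-!
If `x` is cofinal and `[y; m]` is a vertex of `Λ̄`, cofinality at `y(m ∧ d y)` gives a path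
`μ : y(m ∧ d y) → x(n)`, and the class of the boundary path `μ σⁿ x` over `(b, b + d μ)`,
`b = m - m ∧ d y`, joins `[y; m]` to `[x; b + n]`. Conversely, a vertex `v` of `Λ` is the class
`[B; 0]` of any boundary path `B` starting at `v`, and a path of `Λ̄` from `[B; 0]` to `z(N)`
projects to a path of `Λ` from `v` to `x(N ∧ d x)`.

Both `μ σⁿ x` and `B` are built as unions of chains of paths. Local convexity makes them boundary
paths: an `e_i`-edge at a vertex of the chain can be pushed along a path of zero `i`-degree to an
endpoint of the chain that has none.
-/

lemma Pi.single_one_le_of_ne_zero {ι : Type*} [DecidableEq ι] {f : ι → ℕ} {i : ι}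
    (h : f i ≠ 0) : Pi.single i 1 ≤ f := by
  intro j
  rcases eq_or_ne j i with rfl | hj
  · simpa [Nat.one_le_iff_ne_zero]
  · simp [hj]

namespace KGraph

variable {k : ℕ} {Λ : KGraph k}

/-- `vΛ^{e_i} = ∅`. -/
def NoEdge (Λ : KGraph k) (v : Λ.Path) (i : Fin k) : Prop :=
  ∀ e, Λ.r e = v → Λ.d e ≠ Pi.single i 1

lemma r_eq_s_of_d_eq_zero {μ : Λ.Path} (h : Λ.d μ = 0) : Λ.r μ = Λ.s μ := by
  obtain ⟨_, -, huniq⟩ := Λ.factorization μ 0 0 (by simp [h])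
  have h1 := huniq (Λ.r μ, μ) ⟨Λ.d_r μ, h, Λ.s_r μ, (Λ.id_comp μ).symm⟩
  have h2 := huniq (μ, Λ.s μ) ⟨h, Λ.d_s μ, (Λ.r_s μ).symm, (Λ.comp_id μ).symm⟩
  obtain ⟨hr, hs⟩ := Prod.mk.inj (h1.trans h2.symm)
  exact hr.trans hs

section Factorization

open Classical in
/-- The factorization `w = w(0, a) w(a, d w)`; junk `(w, w)` unless `a ≤ d w`. -/
noncomputable def split (w : Λ.Path) (a : Fin k → ℕ) : Λ.Path × Λ.Path :=
  if h : a ≤ Λ.d w then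
    (Λ.factorization w a (Λ.d w - a) (add_tsub_cancel_of_le h).symm).choose
  else (w, w)

variable {w : Λ.Path} {a : Fin k → ℕ}

lemma split_spec (h : a ≤ Λ.d w) :
    Λ.d (split w a).1 = a ∧ Λ.d (split w a).2 = Λ.d w - a ∧
      Λ.s (split w a).1 = Λ.r (split w a).2 ∧ w = Λ.comp (split w a).1 (split w a).2 := by
  rw [split, dif_pos h]
  exact (Λ.factorization w a (Λ.d w - a) (add_tsub_cancel_of_le h).symm).choose_spec.1

lemma split_eq_of_comp {u v : Λ.Path} (huv : Λ.s u = Λ.r v) :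
    split (Λ.comp u v) (Λ.d u) = (u, v) := by
  have hd := Λ.d_comp u v huv
  have h : Λ.d u ≤ Λ.d (Λ.comp u v) := hd ▸ le_self_add
  have hdv : Λ.d v = Λ.d (Λ.comp u v) - Λ.d u := by rw [hd, add_tsub_cancel_left]
  rw [split, dif_pos h]
  exact ((Λ.factorization _ (Λ.d u) _ (add_tsub_cancel_of_le h).symm).choose_spec.2 (u, v)
    ⟨rfl, hdv, huv, rfl⟩).symm

lemma split_composable (h : a ≤ Λ.d w) : Λ.s (split w a).1 = Λ.r (split w a).2 :=
  (split_spec h).2.2.1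

lemma comp_split (h : a ≤ Λ.d w) : Λ.comp (split w a).1 (split w a).2 = w :=
  (split_spec h).2.2.2.symm

lemma r_split_fst (h : a ≤ Λ.d w) : Λ.r (split w a).1 = Λ.r w := by
  conv_rhs => rw [← comp_split h]
  rw [Λ.r_comp _ _ (split_composable h)]

lemma s_split_snd (h : a ≤ Λ.d w) : Λ.s (split w a).2 = Λ.s w := by
  conv_rhs => rw [← comp_split h]
  rw [Λ.s_comp _ _ (split_composable h)]

/-- `w(p, q)`, the middle factor of `w = w(0, p) w(p, q) w(q, d w)`. -/
noncomputable def segment (w : Λ.Path) (p q : Fin k → ℕ) : Λ.Path :=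
  (split (split w q).1 p).2

variable {p q : Fin k → ℕ}

lemma d_segment (hpq : p ≤ q) (hq : q ≤ Λ.d w) : Λ.d (segment w p q) = q - p := by
  have hq' := (split_spec hq).1
  rw [segment, (split_spec (hq'.symm ▸ hpq : p ≤ Λ.d (split w q).1)).2.1, hq']

lemma segment_eq_of_comp {α β γ : Λ.Path} (hαβ : Λ.s α = Λ.r β) (hβγ : Λ.s β = Λ.r γ)
    (hp : Λ.d α = p) (hq : Λ.d α + Λ.d β = q) :
    segment (Λ.comp (Λ.comp α β) γ) p q = β := by
  have h := split_eq_of_comp (u := Λ.comp α β) (v := γ) (by rwa [Λ.s_comp _ _ hαβ])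
  rw [Λ.d_comp _ _ hαβ, hq] at h
  rw [segment, h, ← hp, split_eq_of_comp hαβ]

lemma exists_eq_comp_segment (hpq : p ≤ q) (hq : q ≤ Λ.d w) :
    ∃ α γ, Λ.s α = Λ.r (segment w p q) ∧ Λ.s (segment w p q) = Λ.r γ ∧ Λ.d α = p ∧
      w = Λ.comp (Λ.comp α (segment w p q)) γ := by
  have hp : p ≤ Λ.d (split w q).1 := (split_spec hq).1.symm ▸ hpq
  have hsβ : Λ.s (segment w p q) = Λ.r (split w q).2 := by
    rw [← split_composable hq, ← comp_split hp, Λ.s_comp _ _ (split_composable hp)]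
    rfl
  exact ⟨_, _, split_composable hp, hsβ, (split_spec hp).1,
    by rw [segment, comp_split hp, comp_split hq]⟩

lemma segment_zero_d (w : Λ.Path) : segment w 0 (Λ.d w) = w := by
  have h := segment_eq_of_comp (Λ.s_r w) (Λ.r_s w).symm (Λ.d_r w) (by rw [Λ.d_r, zero_add])
  rwa [Λ.id_comp, Λ.comp_id] at h

lemma segment_comp_right {μ : Λ.Path} (hwμ : Λ.s w = Λ.r μ) (hpq : p ≤ q)
    (hq : q ≤ Λ.d w) : segment (Λ.comp w μ) p q = segment w p q := by
  obtain ⟨α, γ, hαβ, hβγ, hα, hw⟩ := exists_eq_comp_segment hpq hq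
  have hγμ : Λ.s γ = Λ.r μ := by
    rw [← hwμ, hw, Λ.s_comp _ _ (by rw [Λ.s_comp _ _ hαβ]; exact hβγ)]
  conv_lhs => rw [hw, Λ.comp_assoc _ _ _ (by rw [Λ.s_comp _ _ hαβ]; exact hβγ) hγμ]
  refine segment_eq_of_comp hαβ (by rw [Λ.r_comp _ _ hγμ]; exact hβγ) hα ?_
  rw [d_segment hpq hq, hα, add_tsub_cancel_of_le hpq]

lemma r_segment (hpq : p ≤ q) (hq : q ≤ Λ.d w) :
    Λ.r (segment w p q) = segment w p p := by
  obtain ⟨α, γ, hαβ, hβγ, hα, hw⟩ := exists_eq_comp_segment hpq hq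
  set β := segment w p q
  have hβγ' : Λ.s (Λ.r β) = Λ.r (Λ.comp β γ) := by rw [Λ.s_r, Λ.r_comp _ _ hβγ]
  have hw' : w = Λ.comp (Λ.comp α (Λ.r β)) (Λ.comp β γ) := by
    rw [← hαβ, Λ.comp_id, ← Λ.comp_assoc _ _ _ hαβ hβγ, ← hw]
  conv_rhs => rw [hw']
  exact (segment_eq_of_comp (by rw [Λ.r_r, hαβ]) hβγ' hα (by rw [Λ.d_r, add_zero, hα])).symm

lemma s_segment (hpq : p ≤ q) (hq : q ≤ Λ.d w) :
    Λ.s (segment w p q) = segment w q q := by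
  obtain ⟨α, γ, hαβ, hβγ, hα, hw⟩ := exists_eq_comp_segment hpq hq
  set β := segment w p q
  have hαβ' : Λ.s (Λ.comp α β) = Λ.r (Λ.s β) := by rw [Λ.s_comp _ _ hαβ, Λ.r_s]
  have hw' : w = Λ.comp (Λ.comp (Λ.comp α β) (Λ.s β)) γ := by
    rw [← Λ.s_comp _ _ hαβ, Λ.comp_id, ← hw]
  have hdαβ : Λ.d (Λ.comp α β) = q := by
    rw [Λ.d_comp _ _ hαβ, d_segment hpq hq, hα, add_tsub_cancel_of_le hpq]
  conv_rhs => rw [hw']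
  refine (segment_eq_of_comp hαβ' ?_ hdαβ (by rw [Λ.d_s, add_zero, hdαβ])).symm
  rw [Λ.s_s]
  exact hβγ

lemma segment_comp_segment {t : Fin k → ℕ} (hpq : p ≤ q) (hqt : q ≤ t) (ht : t ≤ Λ.d w) :
    Λ.comp (segment w p q) (segment w q t) = segment w p t := by
  obtain ⟨α, γ, hαβ, hβγ, hα, hw⟩ := exists_eq_comp_segment (hpq.trans hqt) ht
  set β := segment w p t
  have hdβ : Λ.d β = t - p := d_segment (hpq.trans hqt) ht
  have hqβ : q - p ≤ Λ.d β := hdβ ▸ tsub_le_tsub_right hqt p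
  obtain ⟨hd₁, hd₂, h₁₂, hβ⟩ := split_spec hqβ
  set β₁ := (split β (q - p)).1
  set β₂ := (split β (q - p)).2
  have hαβ₁ : Λ.s α = Λ.r β₁ := by rw [hαβ, hβ, Λ.r_comp _ _ h₁₂]
  have hβ₂γ : Λ.s β₂ = Λ.r γ := by rw [← hβγ, hβ, Λ.s_comp _ _ h₁₂]
  have hdαβ₁ : Λ.d (Λ.comp α β₁) = q := by
    rw [Λ.d_comp _ _ hαβ₁, hα, hd₁, add_tsub_cancel_of_le hpq]
  have hleft : segment w p q = β₁ := by
    rw [hw, hβ, ← Λ.comp_assoc _ _ _ hαβ₁ h₁₂,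
      Λ.comp_assoc _ _ _ (by rw [Λ.s_comp _ _ hαβ₁]; exact h₁₂) hβ₂γ]
    refine segment_eq_of_comp hαβ₁ (by rw [Λ.r_comp _ _ hβ₂γ]; exact h₁₂) hα ?_
    rw [← Λ.d_comp _ _ hαβ₁, hdαβ₁]
  have hright : segment w q t = β₂ := by
    rw [hw, hβ, ← Λ.comp_assoc _ _ _ hαβ₁ h₁₂]
    refine segment_eq_of_comp (by rw [Λ.s_comp _ _ hαβ₁]; exact h₁₂) hβ₂γ hdαβ₁ ?_
    rw [hdαβ₁, hd₂, hdβ]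
    funext i
    have hpqi : p i ≤ q i := hpq i
    have hqti : q i ≤ t i := hqt i
    simp only [Pi.add_apply, Pi.sub_apply]
    omega
  rw [hleft, hright, ← hβ]

lemma segment_zero_zero (w : Λ.Path) : segment w 0 0 = Λ.r w := by
  conv_rhs => rw [← segment_zero_d w]
  exact (r_segment zero_le le_rfl).symm

lemma segment_d_d (w : Λ.Path) : segment w (Λ.d w) (Λ.d w) = Λ.s w := by
  conv_rhs => rw [← segment_zero_d w]
  exact (s_segment zero_le le_rfl).symm

end Factorization

section Edges

variable {i : Fin k}

lemma d_eq_zero_of_noEdge {μ : Λ.Path} (h : Λ.NoEdge (Λ.r μ) i) : Λ.d μ i = 0 := by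
  by_contra hμ
  have hle := Pi.single_one_le_of_ne_zero hμ
  exact h _ (r_split_fst hle) (split_spec hle).1

lemma noEdge_s_of_noEdge_r {μ : Λ.Path} (h : Λ.NoEdge (Λ.r μ) i) : Λ.NoEdge (Λ.s μ) i := by
  intro e hre hde
  have hd := d_eq_zero_of_noEdge (μ := Λ.comp μ e) (by rwa [Λ.r_comp _ _ hre.symm])
  rw [Λ.d_comp _ _ hre.symm, Pi.add_apply, hde, Pi.single_eq_same] at hd
  omega

/-- Local convexity lets an `e_i`-edge at `r μ` be pushed along `μ` one `e_j`-edge at a time. -/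
lemma noEdge_r_of_noEdge_s (hlc : Λ.LocallyConvex) {μ : Λ.Path} (hμ : Λ.d μ i = 0)
    (h : Λ.NoEdge (Λ.s μ) i) : Λ.NoEdge (Λ.r μ) i := by
  suffices ∀ n (μ : Λ.Path), ∑ j, Λ.d μ j = n → Λ.d μ i = 0 → Λ.NoEdge (Λ.s μ) i →
      Λ.NoEdge (Λ.r μ) i from this _ μ rfl hμ h
  intro n
  induction n using Nat.strong_induction_on with
  | _ n ih =>
  intro μ hn hμ h e hre hde
  by_cases hd : Λ.d μ = 0
  · exact h e (hre.trans (r_eq_s_of_d_eq_zero hd)) hde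
  obtain ⟨j, hj⟩ : ∃ j, Λ.d μ j ≠ 0 := by
    by_contra! hc
    exact hd (funext hc)
  have hji : j ≠ i := fun hji => hj (hji ▸ hμ)
  have hle := Pi.single_one_le_of_ne_zero hj
  obtain ⟨hdf, hdρ, hfρ, -⟩ := split_spec hle
  obtain ⟨e', hre', hde'⟩ :=
    hlc j i hji _ e (by rw [r_split_fst hle, hre]) hdf hde
  have hρ : ∀ l, Λ.d (split μ (Pi.single j 1)).2 l = Λ.d μ l - (Pi.single j 1 : Fin k → ℕ) l :=
    fun l => by rw [hdρ, Pi.sub_apply]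
  refine ih _ ?_ _ rfl ?_ ?_ e' (hre'.trans hfρ) hde'
  · rw [← hn]
    apply Finset.sum_lt_sum
    · intro l _
      rw [hρ]
      exact Nat.sub_le _ _
    · exact ⟨j, Finset.mem_univ _, by rw [hρ, Pi.single_eq_same]; omega⟩
  · rw [hρ, hμ, zero_tsub]
  · rwa [s_split_snd hle]

lemma comp_mem_boundedPaths {n : Fin k → ℕ} (hni : n i ≠ 0) {e μ : Λ.Path}
    (hde : Λ.d e = Pi.single i 1) (heμ : Λ.s e = Λ.r μ)
    (hμ : μ ∈ Λ.boundedPaths (n - Pi.single i 1)) : Λ.comp e μ ∈ Λ.boundedPaths n := by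
  have hsingle : ∀ j, (Pi.single i 1 : Fin k → ℕ) j ≤ n j := Pi.single_one_le_of_ne_zero hni
  have hd : ∀ j, Λ.d (Λ.comp e μ) j = (Pi.single i 1 : Fin k → ℕ) j + Λ.d μ j := by
    rw [Λ.d_comp _ _ heμ, hde]
    exact fun j => rfl
  refine ⟨fun j => ?_, fun j hj => ?_⟩
  · have hμj : Λ.d μ j ≤ n j - (Pi.single i 1 : Fin k → ℕ) j := hμ.1 j
    change Λ.d (Λ.comp e μ) j ≤ n j
    have := hsingle j
    rw [hd]
    omega
  · rw [Λ.s_comp _ _ heμ]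
    refine hμ.2 j ?_
    change Λ.d (Λ.comp e μ) j < n j at hj
    change Λ.d μ j < n j - (Pi.single i 1 : Fin k → ℕ) j
    have := hsingle j
    rw [hd] at hj
    omega

lemma exists_mem_boundedPaths (n : Fin k → ℕ) {v : Λ.Path} (hv : Λ.IsVertex v) :
    ∃ μ ∈ Λ.boundedPaths n, Λ.r μ = v := by
  induction hN : ∑ j, n j using Nat.strong_induction_on generalizing n v with
  | _ N ih =>
  by_cases hc : ∃ i, n i ≠ 0 ∧ ¬ Λ.NoEdge v i
  · obtain ⟨i, hni, hi⟩ := hc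
    simp only [NoEdge, not_forall, not_not] at hi
    obtain ⟨e, hre, hde⟩ := hi
    have hlt : ∑ j, (n - Pi.single i 1 : Fin k → ℕ) j < N := by
      rw [← hN]
      refine Finset.sum_lt_sum (fun j _ => Nat.sub_le _ _) ⟨i, Finset.mem_univ _, ?_⟩
      rw [Pi.sub_apply, Pi.single_eq_same]
      omega
    obtain ⟨μ, hμ, hrμ⟩ := ih _ hlt (n - Pi.single i 1) (Λ.r_s e) rfl
    exact ⟨Λ.comp e μ, comp_mem_boundedPaths hni hde hrμ.symm hμ,
      by rw [Λ.r_comp _ _ hrμ.symm, hre]⟩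
  · push Not at hc
    have hdv : Λ.d v = 0 := hv ▸ Λ.d_r v
    refine ⟨v, ⟨hdv ▸ zero_le, fun j hj => ?_⟩, hv⟩
    change Λ.NoEdge (Λ.s v) j
    rw [← hv, Λ.s_r, hv]
    exact hc j (by rw [hdv] at hj; exact (Nat.pos_of_ne_zero (by omega)).ne')

end Edges

end KGraph

section Emin

variable {k : ℕ} {m m' : Fin k → ℕ} {e : Fin k → ℕ∞}

lemma emin_coe (m : Fin k → ℕ) (e : Fin k → ℕ∞) (i : Fin k) :
    (emin m e i : ℕ∞) = min (m i : ℕ∞) (e i) :=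
  ENat.natCast_toNat (ne_top_of_le_ne_top (ENat.natCast_ne_top _) (min_le_left _ _))

lemma emin_coe_le (m : Fin k → ℕ) (e : Fin k → ℕ∞) (i : Fin k) : (emin m e i : ℕ∞) ≤ e i := by
  rw [emin_coe]
  exact min_le_right _ _

lemma emin_le_self (m : Fin k → ℕ) (e : Fin k → ℕ∞) : emin m e ≤ m := fun i => by
  have h : (emin m e i : ℕ∞) ≤ m i := by
    rw [emin_coe]
    exact min_le_left _ _
  exact_mod_cast h

lemma emin_mono (h : m ≤ m') : emin m e ≤ emin m' e := fun i => by
  have h' : (emin m e i : ℕ∞) ≤ emin m' e i := by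
    rw [emin_coe, emin_coe]
    exact min_le_min_right _ (by exact_mod_cast h i)
  exact_mod_cast h'

lemma emin_eq_self_iff : emin m e = m ↔ ∀ i, (m i : ℕ∞) ≤ e i := by
  refine ⟨fun h i => ?_, fun h => funext fun i => ?_⟩
  · rw [← h]
    exact emin_coe_le _ _ i
  · have h' : (emin m e i : ℕ∞) = m i := by rw [emin_coe, min_eq_left (h i)]
    exact_mod_cast h'

lemma emin_zero (e : Fin k → ℕ∞) : emin 0 e = 0 :=
  emin_eq_self_iff.mpr fun _ => by simp

lemma emin_add_eq {b c : Fin k → ℕ} (hc : ∀ i, (c i : ℕ∞) ≤ e i)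
    (h : ∀ i, b i = 0 ∨ e i = c i) : emin (b + c) e = c := funext fun i => by
  have h' : (emin (b + c) e i : ℕ∞) = c i := by
    rw [emin_coe]
    rcases h i with hb | he
    · rw [Pi.add_apply, hb, zero_add, min_eq_left (hc i)]
    · rw [he, min_eq_right (by exact_mod_cast Nat.le_add_left _ _)]
  exact_mod_cast h'

lemma emin_coe_eq_of_lt {i : Fin k} (h : emin m e i < m i) : (emin m e i : ℕ∞) = e i := by
  have h' : (emin m e i : ℕ∞) < m i := by exact_mod_cast h
  rw [emin_coe] at h' ⊢
  exact min_eq_right (le_of_not_ge fun hle => h'.ne (min_eq_left hle))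

end Emin

namespace BoundaryPath

variable {k : ℕ} {Λ : KGraph k} (x : BoundaryPath Λ)

lemma isVertex_seg {p : Fin k → ℕ} (hp : ∀ i, (p i : ℕ∞) ≤ x.deg i) : Λ.IsVertex (x.seg p p) :=
  x.seg_r p p le_rfl hp

lemma noEdge_seg_iff {n : Fin k → ℕ} (hn : ∀ i, (n i : ℕ∞) ≤ x.deg i) {i : Fin k} :
    Λ.NoEdge (x.seg n n) i ↔ (n i : ℕ∞) = x.deg i := by
  refine ⟨fun h => ?_, x.boundary n hn i⟩
  by_contra hne
  have hlt : (n i : ℕ∞) < x.deg i := lt_of_le_of_ne (hn i) hne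
  have hle : n ≤ n + Pi.single i 1 := le_add_of_nonneg_right zero_le
  have hdeg : ∀ j, ((n + Pi.single i 1 : Fin k → ℕ) j : ℕ∞) ≤ x.deg j := fun j => by
    rcases eq_or_ne j i with rfl | hj
    · simpa using Order.add_one_le_of_lt hlt
    · simpa [Pi.single_eq_of_ne hj] using hn j
  refine h _ (x.seg_r _ _ hle hdeg) ?_
  rw [x.seg_d _ _ hle hdeg, add_tsub_cancel_left]

lemma add_le_deg_of_le_tsub {n q : Fin k → ℕ} (hn : ∀ i, (n i : ℕ∞) ≤ x.deg i)
    (hq : ∀ i, (q i : ℕ∞) ≤ x.deg i - n i) : ∀ i, ((q + n) i : ℕ∞) ≤ x.deg i := fun i => by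
  rw [Pi.add_apply, Nat.cast_add,
    ← (ENat.addLECancellable_natCast (n i)).le_tsub_iff_right (hn i)]
  exact hq i

/-- `σⁿ x`. -/
def shift (n : Fin k → ℕ) (hn : ∀ i, (n i : ℕ∞) ≤ x.deg i) : BoundaryPath Λ where
  deg i := x.deg i - n i
  seg p q := x.seg (p + n) (q + n)
  seg_d p q hpq hq := by
    rw [x.seg_d _ _ (add_le_add_left hpq n) (x.add_le_deg_of_le_tsub hn hq),
      add_tsub_add_eq_tsub_right]
  seg_r p q hpq hq := x.seg_r _ _ (add_le_add_left hpq n) (x.add_le_deg_of_le_tsub hn hq)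
  seg_s p q hpq hq := x.seg_s _ _ (add_le_add_left hpq n) (x.add_le_deg_of_le_tsub hn hq)
  seg_comp p q t hpq hqt ht := x.seg_comp _ _ _ (add_le_add_left hpq n)
    (add_le_add_left hqt n) (x.add_le_deg_of_le_tsub hn ht)
  boundary p hp i hpi := x.boundary _ (x.add_le_deg_of_le_tsub hn hp) i <| by
    rw [Pi.add_apply, Nat.cast_add, hpi, tsub_add_cancel_of_le (hn i)]

lemma shift_seg_zero (n : Fin k → ℕ) (hn : ∀ i, (n i : ℕ∞) ≤ x.deg i) :
    (x.shift n hn).seg 0 0 = x.seg n n := by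
  simp [shift]

end BoundaryPath

namespace KGraph

variable {k : ℕ} {Λ : KGraph k}

section Chain

def IsChain (c : ℕ → Λ.Path) : Prop :=
  ∀ j, ∃ μ, Λ.s (c j) = Λ.r μ ∧ c (j + 1) = Λ.comp (c j) μ

noncomputable def chainDeg (c : ℕ → Λ.Path) (i : Fin k) : ℕ∞ := ⨆ j, (Λ.d (c j) i : ℕ∞)

open Classical in
noncomputable def chainSeg (c : ℕ → Λ.Path) (p q : Fin k → ℕ) : Λ.Path :=
  if h : ∃ j, q ≤ Λ.d (c j) then segment (c h.choose) p q else c 0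

variable {c : ℕ → Λ.Path} {p q : Fin k → ℕ}

lemma le_chainDeg (c : ℕ → Λ.Path) (j : ℕ) (i : Fin k) : (Λ.d (c j) i : ℕ∞) ≤ chainDeg c i :=
  le_iSup (fun j => (Λ.d (c j) i : ℕ∞)) j

namespace IsChain

lemma d_mono (hc : IsChain c) : Monotone fun j => Λ.d (c j) :=
  monotone_nat_of_le_succ fun j => by
    obtain ⟨μ, hs, he⟩ := hc j
    simp only [he, Λ.d_comp _ _ hs, le_add_iff_nonneg_right, zero_le]

lemma segment_eq (hc : IsChain c) {j j' : ℕ} (hjj' : j ≤ j') (hpq : p ≤ q)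
    (hq : q ≤ Λ.d (c j)) : segment (c j') p q = segment (c j) p q := by
  induction j', hjj' using Nat.le_induction with
  | base => rfl
  | succ l hjl ih =>
    obtain ⟨μ, hs, he⟩ := hc l
    rw [he, segment_comp_right hs hpq (hq.trans (hc.d_mono hjl)), ih]

lemma chainSeg_eq (hc : IsChain c) {j : ℕ} (hpq : p ≤ q) (hq : q ≤ Λ.d (c j)) :
    chainSeg c p q = segment (c j) p q := by
  have h : ∃ j, q ≤ Λ.d (c j) := ⟨j, hq⟩
  rw [chainSeg, dif_pos h]
  rcases le_total h.choose j with hj | hj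
  · exact (hc.segment_eq hj hpq h.choose_spec).symm
  · exact hc.segment_eq hj hpq hq

lemma exists_le_d (hc : IsChain c) (hq : ∀ i, (q i : ℕ∞) ≤ chainDeg c i) :
    ∃ j, q ≤ Λ.d (c j) := by
  have h : ∀ i, ∃ j, q i ≤ Λ.d (c j) i := fun i => by
    rcases Nat.eq_zero_or_pos (q i) with h0 | hpos
    · exact ⟨0, by rw [h0]; exact Nat.zero_le _⟩
    have hlt : ((q i - 1 : ℕ) : ℕ∞) < q i := ENat.natCast_lt_natCast.mpr (Nat.sub_lt hpos one_pos)
    obtain ⟨j, hj⟩ := lt_iSup_iff.mp (hlt.trans_le (hq i))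
    exact ⟨j, by have := ENat.natCast_lt_natCast.mp hj; omega⟩
  choose J hJ using h
  exact ⟨Finset.univ.sup J,
    fun i => (hJ i).trans (hc.d_mono (Finset.le_sup (Finset.mem_univ i)) i)⟩

/-- An `e_i`-edge at `c(p)` could be pushed, by local convexity, along the `i`-flat path from
`c(p)` to an endpoint `s (c j')` that has none. -/
lemma noEdge_chainSeg (hc : IsChain c) (hlc : Λ.LocallyConvex)
    (hend : ∀ i, chainDeg c i ≠ ⊤ → ∀ j, ∃ j' ≥ j, Λ.NoEdge (Λ.s (c j')) i)
    (hp : ∀ i, (p i : ℕ∞) ≤ chainDeg c i) {i : Fin k} (hpi : (p i : ℕ∞) = chainDeg c i) :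
    Λ.NoEdge (chainSeg c p p) i := by
  obtain ⟨j, hj⟩ := hc.exists_le_d hp
  obtain ⟨j', hjj', hno⟩ := hend i (hpi ▸ ENat.natCast_ne_top _) j
  have hpj' : p ≤ Λ.d (c j') := hj.trans (hc.d_mono hjj')
  have hdi : Λ.d (c j') i = p i :=
    le_antisymm (by exact_mod_cast hpi ▸ le_chainDeg c j' i) (hpj' i)
  have hdρ : Λ.d (segment (c j') p (Λ.d (c j'))) i = 0 := by
    rw [d_segment hpj' le_rfl, Pi.sub_apply, hdi, tsub_self]
  have h := noEdge_r_of_noEdge_s hlc hdρ (by rwa [s_segment hpj' le_rfl, segment_d_d])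
  rwa [r_segment hpj' le_rfl, ← hc.chainSeg_eq le_rfl hpj'] at h

/-- The boundary path `⋃ j, c j`. -/
noncomputable def boundaryPath (hc : IsChain c) (hlc : Λ.LocallyConvex)
    (hend : ∀ i, chainDeg c i ≠ ⊤ → ∀ j, ∃ j' ≥ j, Λ.NoEdge (Λ.s (c j')) i) :
    BoundaryPath Λ where
  deg := chainDeg c
  seg := chainSeg c
  seg_d p q hpq hq := by
    obtain ⟨j, hj⟩ := hc.exists_le_d hq
    rw [hc.chainSeg_eq hpq hj, d_segment hpq hj]
  seg_r p q hpq hq := by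
    obtain ⟨j, hj⟩ := hc.exists_le_d hq
    rw [hc.chainSeg_eq hpq hj, hc.chainSeg_eq le_rfl (hpq.trans hj), r_segment hpq hj]
  seg_s p q hpq hq := by
    obtain ⟨j, hj⟩ := hc.exists_le_d hq
    rw [hc.chainSeg_eq hpq hj, hc.chainSeg_eq le_rfl hj, s_segment hpq hj]
  seg_comp p q t hpq hqt ht := by
    obtain ⟨j, hj⟩ := hc.exists_le_d ht
    rw [hc.chainSeg_eq hpq (hqt.trans hj), hc.chainSeg_eq hqt hj,
      hc.chainSeg_eq (hpq.trans hqt) hj, segment_comp_segment hpq hqt hj]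
  boundary _ hp _ hpi := hc.noEdge_chainSeg hlc hend hp hpi

lemma boundaryPath_seg_zero (hc : IsChain c) (hlc : Λ.LocallyConvex) (hend) :
    (hc.boundaryPath hlc hend).seg 0 0 = Λ.r (c 0) := by
  change chainSeg c 0 0 = _
  rw [hc.chainSeg_eq le_rfl zero_le, segment_zero_zero]

end IsChain

end Chain

end KGraph

namespace BoundaryPath

variable {k : ℕ} {Λ : KGraph k} (t : BoundaryPath Λ)

noncomputable def trunc (j : ℕ) : Fin k → ℕ := emin (fun _ => j) t.deg

lemma trunc_le_deg (j : ℕ) (i : Fin k) : (t.trunc j i : ℕ∞) ≤ t.deg i := emin_coe_le _ _ i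

lemma trunc_mono : Monotone t.trunc := fun _ _ h => emin_mono fun _ => h

lemma iSup_trunc (i : Fin k) : ⨆ j, (t.trunc j i : ℕ∞) = t.deg i := by
  simp only [trunc, emin_coe]
  rw [← iSup_inf_eq, ENat.iSup_natCast, top_inf_eq]

lemma trunc_eq_deg {i : Fin k} {j : ℕ} (h : t.deg i ≤ j) : (t.trunc j i : ℕ∞) = t.deg i := by
  rw [trunc, emin_coe, min_eq_right h]

variable {μ : Λ.Path}

lemma s_eq_r_seg (hs : Λ.s μ = t.seg 0 0) {q : Fin k → ℕ} (hq : ∀ i, (q i : ℕ∞) ≤ t.deg i) :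
    Λ.s μ = Λ.r (t.seg 0 q) := by
  rw [t.seg_r 0 q zero_le hq, hs]

/-- The chain `μ t(0, j ∧ d t)` of initial segments of `μ t`. -/
noncomputable def extendChain (μ : Λ.Path) (j : ℕ) : Λ.Path := Λ.comp μ (t.seg 0 (t.trunc j))

lemma d_extendChain (hs : Λ.s μ = t.seg 0 0) (j : ℕ) :
    Λ.d (t.extendChain μ j) = Λ.d μ + t.trunc j := by
  rw [extendChain, Λ.d_comp _ _ (t.s_eq_r_seg hs (t.trunc_le_deg j)),
    t.seg_d 0 _ zero_le (t.trunc_le_deg j), tsub_zero]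

lemma s_extendChain (hs : Λ.s μ = t.seg 0 0) (j : ℕ) :
    Λ.s (t.extendChain μ j) = t.seg (t.trunc j) (t.trunc j) := by
  rw [extendChain, Λ.s_comp _ _ (t.s_eq_r_seg hs (t.trunc_le_deg j)),
    t.seg_s 0 _ zero_le (t.trunc_le_deg j)]

lemma isChain_extendChain (hs : Λ.s μ = t.seg 0 0) : KGraph.IsChain (t.extendChain μ) := by
  intro j
  have hjj : t.trunc j ≤ t.trunc (j + 1) := t.trunc_mono j.le_succ
  refine ⟨t.seg (t.trunc j) (t.trunc (j + 1)), ?_, ?_⟩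
  · rw [t.s_extendChain hs, t.seg_r _ _ hjj (t.trunc_le_deg _)]
  · rw [extendChain, extendChain, ← t.seg_comp 0 _ _ zero_le hjj (t.trunc_le_deg _),
      Λ.comp_assoc _ _ _ (t.s_eq_r_seg hs (t.trunc_le_deg j))
        (by rw [t.seg_s 0 _ zero_le (t.trunc_le_deg j), t.seg_r _ _ hjj (t.trunc_le_deg _)])]

lemma chainDeg_extendChain (hs : Λ.s μ = t.seg 0 0) (i : Fin k) :
    KGraph.chainDeg (t.extendChain μ) i = Λ.d μ i + t.deg i := by
  simp only [KGraph.chainDeg, t.d_extendChain hs, Pi.add_apply, Nat.cast_add]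
  rw [← ENat.add_iSup, t.iSup_trunc]

lemma noEdge_s_extendChain (hs : Λ.s μ = t.seg 0 0) (i : Fin k)
    (hi : KGraph.chainDeg (t.extendChain μ) i ≠ ⊤) (j : ℕ) :
    ∃ j' ≥ j, Λ.NoEdge (Λ.s (t.extendChain μ j')) i := by
  rw [t.chainDeg_extendChain hs] at hi
  set T := (t.deg i).toNat
  have hT : (T : ℕ∞) = t.deg i := ENat.natCast_toNat (WithTop.add_ne_top.mp hi).2
  refine ⟨max j T, le_max_left _ _, ?_⟩
  rw [t.s_extendChain hs, t.noEdge_seg_iff (t.trunc_le_deg _)]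
  exact t.trunc_eq_deg (hT ▸ ENat.natCast_le_natCast.mpr (le_max_right _ _))

/-- The boundary path `μ t`. -/
noncomputable def extend (hlc : Λ.LocallyConvex) (hs : Λ.s μ = t.seg 0 0) : BoundaryPath Λ :=
  (t.isChain_extendChain hs).boundaryPath hlc (t.noEdge_s_extendChain hs)

variable (hlc : Λ.LocallyConvex) (hs : Λ.s μ = t.seg 0 0)

lemma extend_deg (i : Fin k) : (t.extend hlc hs).deg i = Λ.d μ i + t.deg i :=
  t.chainDeg_extendChain hs i

lemma extend_seg_zero : (t.extend hlc hs).seg 0 0 = Λ.r μ := by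
  rw [extend, KGraph.IsChain.boundaryPath_seg_zero, extendChain,
    Λ.r_comp _ _ (t.s_eq_r_seg hs (t.trunc_le_deg 0))]

lemma extend_seg_d : (t.extend hlc hs).seg (Λ.d μ) (Λ.d μ) = t.seg 0 0 := by
  change KGraph.chainSeg _ _ _ = _
  rw [(t.isChain_extendChain hs).chainSeg_eq le_rfl (j := 0)
      (by rw [t.d_extendChain hs]; exact le_self_add),
    extendChain, KGraph.segment_comp_right (t.s_eq_r_seg hs (t.trunc_le_deg 0)) le_rfl le_rfl,
    KGraph.segment_d_d, hs]

end BoundaryPath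

namespace KGraph

variable {k : ℕ} {Λ : KGraph k}

section Greedy

noncomputable def nextStep (w : Λ.Path) : Λ.Path :=
  (exists_mem_boundedPaths 1 (Λ.r_s w)).choose

lemma nextStep_mem (w : Λ.Path) : nextStep w ∈ Λ.boundedPaths 1 :=
  (exists_mem_boundedPaths 1 (Λ.r_s w)).choose_spec.1

lemma r_nextStep (w : Λ.Path) : Λ.r (nextStep w) = Λ.s w :=
  (exists_mem_boundedPaths 1 (Λ.r_s w)).choose_spec.2

noncomputable def greedyChain (v : Λ.Path) : ℕ → Λ.Path
  | 0 => v
  | j + 1 => Λ.comp (greedyChain v j) (nextStep (greedyChain v j))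

lemma isChain_greedyChain (v : Λ.Path) : IsChain (greedyChain v) :=
  fun _ => ⟨_, (r_nextStep _).symm, rfl⟩

/-- Once the `i`-th degree of the chain has stopped growing, the next step has no `e_i`
component, so by the definition of `Λ^{≤ 1}` its source has no `e_i`-edge. -/
lemma noEdge_s_greedyChain (v : Λ.Path) (i : Fin k) (hi : chainDeg (greedyChain v) i ≠ ⊤)
    (j : ℕ) : ∃ j' ≥ j, Λ.NoEdge (Λ.s (greedyChain v j')) i := by
  set c := greedyChain v
  obtain ⟨J, hJ⟩ := ENat.exists_eq_iSup_of_lt_top (lt_top_iff_ne_top.mpr hi)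
  set l := max j J
  refine ⟨l + 1, by omega, ?_⟩
  have hl : (Λ.d (c l) i : ℕ∞) = chainDeg c i :=
    le_antisymm (le_chainDeg c l i) <| by
      rw [chainDeg, ← hJ, ENat.natCast_le_natCast]
      exact (isChain_greedyChain v).d_mono (le_max_right j J) i
  have hstep : Λ.d (nextStep (c l)) i < 1 := by
    have h := le_chainDeg c (l + 1) i
    rw [← hl, show c (l + 1) = Λ.comp (c l) (nextStep (c l)) from rfl,
      Λ.d_comp _ _ (r_nextStep _).symm, Pi.add_apply, ENat.natCast_le_natCast] at h
    omega
  rw [show c (l + 1) = Λ.comp (c l) (nextStep (c l)) from rfl,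
    Λ.s_comp _ _ (r_nextStep _).symm]
  exact (nextStep_mem (c l)).2 i hstep

noncomputable def greedyBoundaryPath (hlc : Λ.LocallyConvex) (v : Λ.Path) : BoundaryPath Λ :=
  (isChain_greedyChain v).boundaryPath hlc (noEdge_s_greedyChain v)

lemma greedyBoundaryPath_seg_zero (hlc : Λ.LocallyConvex) {v : Λ.Path} (hv : Λ.IsVertex v) :
    (greedyBoundaryPath hlc v).seg 0 0 = v :=
  (IsChain.boundaryPath_seg_zero _ hlc _).trans hv

end Greedy

end KGraph

namespace Desourcification

variable {k : ℕ} {Λ : KGraph k} (D : Desourcification Λ)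

lemma exists_eq_cls_of_isVertex {w : D.bar.Path} (hw : D.bar.IsVertex w) :
    ∃ y m, w = D.cls y m m := by
  obtain ⟨y, m, h⟩ := D.cls_surjective w
  rw [← hw, D.bar.d_r, add_zero, hw] at h
  exact ⟨y, m, h⟩

lemma isVertex_emb {v : Λ.Path} (hv : Λ.IsVertex v) : D.bar.IsVertex (D.emb v) := by
  rw [KGraph.IsVertex, ← D.emb_r, hv]

lemma emb_eq_cls {v : Λ.Path} (hv : Λ.IsVertex v) {B : BoundaryPath Λ} (hB : B.seg 0 0 = v) :
    D.emb v = D.cls B 0 0 := by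
  have hdv : Λ.d v = 0 := hv ▸ Λ.d_r v
  have h := D.emb_cls v B B (by rw [hB, ← hv, Λ.s_r]) ⟨fun i => by simp [hdv],
    by rw [hdv, hB], fun p _ => by rw [hdv, zero_add]⟩
  rwa [hdv] at h

/-- `μ` is the projection `π ν`. -/
lemma exists_path_of_cls {ν : D.bar.Path} {B x : BoundaryPath Λ} {N : Fin k → ℕ}
    (hr : D.bar.r ν = D.cls B 0 0) (hs : D.bar.s ν = D.cls x N N) :
    ∃ μ, Λ.r μ = B.seg 0 0 ∧ Λ.s μ = x.seg (emin N x.deg) (emin N x.deg) := by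
  obtain ⟨Y, m, hν⟩ := D.cls_surjective ν
  set M := m + D.bar.d ν
  have hmM : m ≤ M := le_self_add
  rw [hν, D.r_cls _ _ _ hmM, D.cls_eq_iff _ _ _ _ _ _ le_rfl le_rfl, emin_zero] at hr
  rw [hν, D.s_cls _ _ _ hmM, D.cls_eq_iff _ _ _ _ _ _ le_rfl le_rfl] at hs
  obtain ⟨hrY, hm, -⟩ := hr
  have hmY : emin m Y.deg = m :=
    le_antisymm (emin_le_self _ _) (tsub_eq_zero_iff_le.mp (by rw [hm, tsub_zero]))
  have hmE : m ≤ emin M Y.deg := hmY ▸ emin_mono hmM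
  have hE : ∀ i, (emin M Y.deg i : ℕ∞) ≤ Y.deg i := emin_coe_le _ _
  refine ⟨Y.seg m (emin M Y.deg), ?_, ?_⟩
  · rw [Y.seg_r _ _ hmE hE, ← hrY, hmY]
  · rw [Y.seg_s _ _ hmE hE, hs.1]

/-- `ν` is the class of `(μ σⁿ x; (b, b + d μ))` with `b = m - m ∧ d y`. Where `b i ≠ 0`, the
vertex `y(m ∧ d y)` has no `e_i`-edge, so neither `μ` nor `σⁿ x` extends in direction `i`. -/
lemma exists_path_cls_of_path (hlc : Λ.LocallyConvex) {y x : BoundaryPath Λ} {m n : Fin k → ℕ}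
    (hn : ∀ i, (n i : ℕ∞) ≤ x.deg i) {μ : Λ.Path}
    (hr : Λ.r μ = y.seg (emin m y.deg) (emin m y.deg)) (hs : Λ.s μ = x.seg n n) :
    ∃ N ν, D.bar.r ν = D.cls y m m ∧ D.bar.s ν = D.cls x N N := by
  set b := m - emin m y.deg
  have hphantom : ∀ i, b i = 0 ∨ Λ.d μ i = 0 ∧ (n i : ℕ∞) = x.deg i := by
    intro i
    refine or_iff_not_imp_left.mpr fun hb => ?_
    have hno : Λ.NoEdge (Λ.r μ) i := by
      rw [hr, y.noEdge_seg_iff (emin_coe_le _ _)]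
      exact emin_coe_eq_of_lt (by change ¬m i - emin m y.deg i = 0 at hb; omega)
    exact ⟨KGraph.d_eq_zero_of_noEdge hno,
      (x.noEdge_seg_iff hn).mp (hs ▸ KGraph.noEdge_s_of_noEdge_r hno)⟩
  set t := x.shift n hn
  have ht : Λ.s μ = t.seg 0 0 := by rw [hs, x.shift_seg_zero]
  set Z := t.extend hlc ht
  have hZ : ∀ i, Z.deg i = Λ.d μ i + (x.deg i - n i) := t.extend_deg hlc ht
  have hZ0 : emin b Z.deg = 0 := by
    simpa only [add_zero] using emin_add_eq (b := b) (c := 0) (fun _ => zero_le) fun i =>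
      (hphantom i).imp_right fun h => by rw [hZ, h.1, h.2, tsub_self]; rfl
  have hZμ : emin (b + Λ.d μ) Z.deg = Λ.d μ := emin_add_eq (fun i => hZ i ▸ le_self_add)
    fun i => (hphantom i).imp_right fun h => by rw [hZ, h.2, tsub_self, add_zero]
  have hxn : emin (b + n) x.deg = n := emin_add_eq hn fun i => (hphantom i).imp_right (·.2.symm)
  refine ⟨b + n, D.cls Z b (b + Λ.d μ), ?_, ?_⟩
  · rw [D.r_cls _ _ _ le_self_add, D.cls_eq_iff _ _ _ _ _ _ le_rfl le_rfl]
    refine ⟨?_, by rw [hZ0, tsub_zero], by rw [tsub_self, tsub_self]⟩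
    rw [hZ0, t.extend_seg_zero hlc ht, hr]
  · rw [D.s_cls _ _ _ le_self_add, D.cls_eq_iff _ _ _ _ _ _ le_rfl le_rfl, hZμ, hxn,
      t.extend_seg_d hlc ht, add_tsub_cancel_right, add_tsub_cancel_right]
    exact ⟨x.shift_seg_zero n hn, rfl, by rw [tsub_self, tsub_self]⟩

end Desourcification

theorem statement9_general {k : ℕ} (Λ : KGraph k) (hlc : Λ.LocallyConvex)
    (D : Desourcification Λ) (x : BoundaryPath Λ)
    (z : BoundaryPath D.bar) (hz : IsInfClass D x 0 z) :
    Λ.CofinalBP x ↔ D.bar.CofinalBP z := by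
  have hzN : ∀ N, z.seg N N = D.cls x N N := fun N => by simpa using hz.2 N N le_rfl
  constructor
  · intro hx w hw
    obtain ⟨y, m, rfl⟩ := D.exists_eq_cls_of_isVertex hw
    obtain ⟨n, hn, μ, hrμ, hsμ⟩ := hx _ (y.isVertex_seg (emin_coe_le m y.deg))
    obtain ⟨N, ν, hr, hs⟩ := D.exists_path_cls_of_path hlc hn hrμ hsμ
    exact ⟨N, fun i => by simp [hz.1 i], ν, hr, by rw [hs, hzN]⟩
  · intro hzc v hv
    have hB := KGraph.greedyBoundaryPath_seg_zero hlc hv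
    obtain ⟨N, -, ν, hr, hs⟩ := hzc (D.emb v) (D.isVertex_emb hv)
    rw [D.emb_eq_cls hv hB] at hr
    obtain ⟨μ, hrμ, hsμ⟩ := D.exists_path_of_cls hr (hs.trans (hzN N))
    exact ⟨emin N x.deg, emin_coe_le N x.deg, μ, hrμ.trans hB, hsμ⟩

/-- Lemma 4.3: Let `Λ` be a locally convex row-finite
`k`-graph with desourcification `Λ̄`, and `x ∈ Λ^{≤∞}`.  Then `x` is cofinal
in `Λ` iff the infinite path `[x;(0,∞)]` is cofinal in `Λ̄`. -/
theorem statement9 {k : ℕ} (Λ : KGraph k) (hlc : Λ.LocallyConvex)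
    (hrf : Λ.RowFinite) (D : Desourcification Λ) (x : BoundaryPath Λ)
    (z : BoundaryPath D.bar) (hz : IsInfClass D x 0 z) :
    Λ.CofinalBP x ↔ D.bar.CofinalBP z :=
  statement9_general Λ hlc D x z hz
end

section
/- Let Λ be a locally convex row-finite k-graph. The following two conditions are equivalent: (2) there exist nonempty, disjoint saturated hereditary subsets H₁, H₂ ⊆ Λ^0 such that for every v ∈ Λ^0 \ (H₁ ∪ H₂) there is some n ∈ ℕ^k with s(vΛ^{≤n}) ⊆ H₁ ∪ H₂; (3) there exists a nonempty saturated hereditary subset H ⊆ Λ^0 such that Λ^0 ≻ H. -/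
/-!
If `v` reaches a hereditary set `H`, then so does the source of some path in `vΛ^{≤n}`, for
every `n`. The path is built one edge at a time: if `v` has an edge of colour `i`, local
convexity lets a path from `v` into `H` be extended to one that starts with such an edge; if it
has none, no path from `v` ends at a vertex that has one, so colour `i` may be dropped from `n`.
Hence `Δ(Λ^0, H)` is saturated, and `(Δ(Λ^0, H), H)` witnesses (2) whenever `Λ^0 ≻ H`.
Conversely, given (2), `H₁ ⊆ Δ(Λ^0, H₂)` by disjointness and heredity, and `Λ^0 ≻ H₂` follows.
-/

namespace KGraph

variable {k : ℕ} (Λ : KGraph k)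

def HasEdge (v : Λ.Path) (i : Fin k) : Prop :=
  ∃ e, Λ.r e = v ∧ Λ.d e = Pi.single i 1

variable {Λ}

lemma not_hasEdge_iff {v : Λ.Path} {i : Fin k} :
    ¬ Λ.HasEdge v i ↔ ∀ e, Λ.r e = v → Λ.d e ≠ Pi.single i 1 := by
  simp [HasEdge]

lemma r_eq_self_of_d_eq_zero {μ : Λ.Path} (h : Λ.d μ = 0) : Λ.r μ = μ := by
  obtain ⟨p, -, hu⟩ := Λ.factorization μ 0 0 (by simp [h])
  have h₁ : (Λ.r μ, μ) = p := hu _ ⟨Λ.d_r μ, h, Λ.s_r μ, (Λ.id_comp μ).symm⟩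
  have h₂ : (μ, Λ.s μ) = p := hu _ ⟨h, Λ.d_s μ, (Λ.r_s μ).symm, (Λ.comp_id μ).symm⟩
  exact congrArg Prod.fst (h₁.trans h₂.symm)

lemma exists_factor (μ : Λ.Path) {m : Fin k → ℕ} (hm : m ≤ Λ.d μ) :
    ∃ μ₁ μ₂ : Λ.Path, Λ.d μ₁ = m ∧ Λ.d μ₂ = Λ.d μ - m ∧ Λ.s μ₁ = Λ.r μ₂ ∧
      Λ.r μ₁ = Λ.r μ ∧ Λ.s μ₂ = Λ.s μ ∧ μ = Λ.comp μ₁ μ₂ := by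
  obtain ⟨⟨μ₁, μ₂⟩, ⟨hd₁, hd₂, hsr, rfl⟩, -⟩ :=
    Λ.factorization μ m (Λ.d μ - m) (add_tsub_cancel_of_le hm).symm
  exact ⟨μ₁, μ₂, hd₁, hd₂, hsr, (Λ.r_comp _ _ hsr).symm, (Λ.s_comp _ _ hsr).symm, rfl⟩

lemma single_le_of_pos {i : Fin k} {m : Fin k → ℕ} (h : 0 < m i) : Pi.single i 1 ≤ m := by
  intro l
  rcases eq_or_ne l i with rfl | hl
  · simpa using Nat.one_le_of_lt h
  · simp [Pi.single_eq_of_ne hl]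

lemma sub_single_lt {j : Fin k} {m : Fin k → ℕ} (h : 0 < m j) : m - Pi.single j 1 < m :=
  Pi.lt_def.mpr ⟨tsub_le_self, j, by simp; omega⟩

lemma hasEdge_r_of_pos {μ : Λ.Path} {i : Fin k} (h : 0 < Λ.d μ i) : Λ.HasEdge (Λ.r μ) i := by
  obtain ⟨μ₁, -, hd₁, -, -, hr₁, -⟩ := exists_factor μ (single_le_of_pos h)
  exact ⟨μ₁, hr₁, hd₁⟩

lemma hasEdge_r_of_hasEdge_s {μ : Λ.Path} {i : Fin k} (h : Λ.HasEdge (Λ.s μ) i) :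
    Λ.HasEdge (Λ.r μ) i := by
  obtain ⟨f, hrf, hdf⟩ := h
  have hsr : Λ.s μ = Λ.r f := hrf.symm
  have hpos : 0 < Λ.d (Λ.comp μ f) i := by simp [Λ.d_comp _ _ hsr, hdf]
  simpa [Λ.r_comp _ _ hsr] using hasEdge_r_of_pos hpos

/-- Peel off an edge of colour `j ≠ i` from `μ` and apply local convexity to it and the
`e_i`-edge at `r μ`. -/
lemma hasEdge_s_of_hasEdge_r (hlc : Λ.LocallyConvex) {μ : Λ.Path} {i : Fin k}
    (hμ : Λ.d μ i = 0) (h : Λ.HasEdge (Λ.r μ) i) : Λ.HasEdge (Λ.s μ) i := by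
  induction hd : Λ.d μ using WellFoundedLT.induction generalizing μ with
  | _ d IH =>
    subst hd
    by_cases h0 : Λ.d μ = 0
    · rwa [← r_eq_self_of_d_eq_zero h0, Λ.s_r]
    obtain ⟨j, hj⟩ : ∃ j, Λ.d μ j ≠ 0 := by
      by_contra! hz
      exact h0 (funext hz)
    have hji : j ≠ i := fun hji => hj (hji ▸ hμ)
    obtain ⟨μ₁, μ₂, hd₁, hd₂, hsr, hr₁, hs₂, -⟩ :=
      exists_factor μ (single_le_of_pos (Nat.pos_of_ne_zero hj))
    obtain ⟨e, hre, hde⟩ := h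
    obtain ⟨e', hre', hde'⟩ := hlc j i hji μ₁ e (hr₁.trans hre.symm) hd₁ hde
    have hlt : Λ.d μ₂ < Λ.d μ := hd₂ ▸ sub_single_lt (Nat.pos_of_ne_zero hj)
    have hμ₂ : Λ.d μ₂ i = 0 := by simp [hd₂, hμ]
    rw [← hs₂]
    exact IH _ hlt hμ₂ ⟨e', hre'.trans hsr, hde'⟩ rfl

lemma update_zero_lt {i : Fin k} {n : Fin k → ℕ} (h : 0 < n i) : Function.update n i 0 < n :=
  Pi.lt_def.mpr ⟨update_le_iff.2 ⟨Nat.zero_le _, fun _ _ => le_rfl⟩, i, by simpa using h⟩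

lemma comp_mem_boundedPaths_s11 {α β : Λ.Path} {n : Fin k → ℕ} (hsr : Λ.s α = Λ.r β)
    (hα : Λ.d α ≤ n) (hβ : β ∈ Λ.boundedPaths (n - Λ.d α)) :
    Λ.comp α β ∈ Λ.boundedPaths n := by
  obtain ⟨hβn, hβs⟩ := hβ
  rw [boundedPaths, Set.mem_ofPred_eq, Λ.d_comp _ _ hsr, Λ.s_comp _ _ hsr]
  refine ⟨fun l => ?_, fun l hl => hβs l ?_⟩
  · have := hβn l; have := hα l
    simp only [Pi.add_apply, Pi.sub_apply] at *
    omega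
  · simp only [Pi.add_apply, Pi.sub_apply] at *
    omega

lemma mem_boundedPaths_of_update {lam : Λ.Path} {n : Fin k → ℕ} {i : Fin k}
    (hlam : lam ∈ Λ.boundedPaths (Function.update n i 0)) (hi : ¬ Λ.HasEdge (Λ.r lam) i) :
    lam ∈ Λ.boundedPaths n := by
  obtain ⟨hle, hs⟩ := hlam
  refine ⟨hle.trans (update_le_iff.2 ⟨Nat.zero_le _, fun _ _ => le_rfl⟩), fun l hl => ?_⟩
  rcases eq_or_ne l i with rfl | hli
  · exact not_hasEdge_iff.mp (mt hasEdge_r_of_hasEdge_s hi)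
  · exact hs l (by simpa [hli] using hl)

theorem exists_mem_boundedPaths_tree_inter_nonempty (hlc : Λ.LocallyConvex) {H : Set Λ.Path}
    (hH : Λ.Hereditary H) (n : Fin k → ℕ) {v : Λ.Path} (hv : (Λ.tree v ∩ H).Nonempty) :
    ∃ lam ∈ Λ.boundedPaths n, Λ.r lam = v ∧ (Λ.tree (Λ.s lam) ∩ H).Nonempty := by
  induction n using WellFoundedLT.induction generalizing v with
  | _ n IH =>
    obtain ⟨_, ⟨μ, rfl, rfl⟩, hμH⟩ := hv
    by_cases hn : ∃ i, 0 < n i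
    swap
    · obtain rfl : n = 0 := funext fun i => by simpa using not_exists.mp hn i
      refine ⟨Λ.r μ, ⟨by simp [Λ.d_r], by simp [Λ.d_r]⟩, Λ.r_r μ, Λ.s μ, ?_, hμH⟩
      exact ⟨μ, by rw [Λ.s_r], rfl⟩
    obtain ⟨i, hi⟩ := hn
    by_cases he : Λ.HasEdge (Λ.r μ) i
    · obtain ⟨μ', hr', hH', hpos⟩ : ∃ μ', Λ.r μ' = Λ.r μ ∧ Λ.s μ' ∈ H ∧ 0 < Λ.d μ' i := by
        by_cases hμi : 0 < Λ.d μ i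
        · exact ⟨μ, rfl, hμH, hμi⟩
        obtain ⟨f, hrf, hdf⟩ := hasEdge_s_of_hasEdge_r hlc (by omega) he
        refine ⟨Λ.comp μ f, Λ.r_comp _ _ hrf.symm, ?_, by simp [Λ.d_comp _ _ hrf.symm, hdf]⟩
        exact Λ.s_comp _ _ hrf.symm ▸ hH f (hrf ▸ hμH)
      obtain ⟨e, μ₂, hde, -, hsr, hre, hs₂, -⟩ := exists_factor μ' (single_le_of_pos hpos)
      obtain ⟨lam, hlam, hr, hreach⟩ :=
        IH _ (sub_single_lt hi) ⟨Λ.s μ₂, ⟨μ₂, rfl, rfl⟩, hs₂ ▸ hH'⟩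
      have hsr' : Λ.s e = Λ.r lam := hsr.trans hr.symm
      refine ⟨Λ.comp e lam, ?_, ?_, ?_⟩
      · exact comp_mem_boundedPaths_s11 hsr' (hde ▸ single_le_of_pos hi) (hde ▸ hlam)
      · rw [Λ.r_comp _ _ hsr', hre, hr']
      · rwa [Λ.s_comp _ _ hsr']
    · obtain ⟨lam, hlam, hr, hreach⟩ :=
        IH _ (update_zero_lt hi) ⟨Λ.s μ, ⟨μ, rfl, rfl⟩, hμH⟩
      exact ⟨lam, mem_boundedPaths_of_update hlam (hr ▸ he), hr, hreach⟩

lemma hereditary_setOf_isVertex : Λ.Hereditary {v | Λ.IsVertex v} :=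
  fun lam _ => Λ.r_s lam

lemma saturated_setOf_isVertex : Λ.Saturated {v | Λ.IsVertex v} :=
  fun _ hv _ => hv

lemma hereditary_delta {K H : Set Λ.Path} (hK : Λ.Hereditary K) :
    Λ.Hereditary (Λ.Delta K H) := by
  rintro lam ⟨hlam, hempty⟩
  refine ⟨hK lam hlam, Set.eq_empty_of_forall_notMem ?_⟩
  rintro _ ⟨⟨μ, hrμ, rfl⟩, hμH⟩
  have hsr : Λ.s lam = Λ.r μ := hrμ.symm
  exact hempty.subset ⟨⟨Λ.comp lam μ, Λ.r_comp _ _ hsr, Λ.s_comp _ _ hsr⟩, hμH⟩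

lemma disjoint_delta {K H : Set Λ.Path} (hK : ∀ v ∈ K, Λ.IsVertex v) :
    Disjoint (Λ.Delta K H) H := by
  refine Set.disjoint_left.mpr fun v ⟨hvK, hempty⟩ hvH => hempty.subset ⟨?_, hvH⟩
  exact ⟨v, hK v hvK, by rw [← hK v hvK, Λ.s_r]⟩

lemma saturated_delta (hlc : Λ.LocallyConvex) {K H : Set Λ.Path} (hK : Λ.Saturated K)
    (hH : Λ.Hereditary H) : Λ.Saturated (Λ.Delta K H) := by
  rintro v hv ⟨n, hn⟩
  refine ⟨hK v hv ⟨n, fun lam hlam hr => (hn lam hlam hr).1⟩, ?_⟩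
  by_contra hreach
  obtain ⟨lam, hlam, hr, hlamH⟩ :=
    exists_mem_boundedPaths_tree_inter_nonempty hlc hH n
      (Set.nonempty_iff_ne_empty.mpr hreach)
  exact hlamH.ne_empty (hn lam hlam hr).2

lemma subset_delta_of_disjoint {K H₁ H₂ : Set Λ.Path} (hK : H₁ ⊆ K)
    (hH₁ : Λ.Hereditary H₁) (hdisj : Disjoint H₁ H₂) : H₁ ⊆ Λ.Delta K H₂ := by
  refine fun u hu => ⟨hK hu, Set.eq_empty_of_forall_notMem ?_⟩
  rintro _ ⟨⟨μ, rfl, rfl⟩, hμH₂⟩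
  exact Set.disjoint_left.mp hdisj (hH₁ μ hu) hμH₂

lemma mem_omega_of_notMem_union {K H : Set Λ.Path} {v : Λ.Path} (hv : v ∈ K)
    (hnot : v ∉ Λ.Delta K H ∪ H) : v ∈ Λ.Omega K H :=
  ⟨⟨hv, fun h => hnot (.inr h)⟩, Set.nonempty_iff_ne_empty.mpr fun h => hnot (.inl ⟨hv, h⟩)⟩

end KGraph

theorem statement11_general {k : ℕ} (Λ : KGraph k) (hlc : Λ.LocallyConvex) :
    (∃ H₁ H₂ : Set Λ.Path,
      (∀ v ∈ H₁, Λ.IsVertex v) ∧ (∀ v ∈ H₂, Λ.IsVertex v) ∧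
      H₁.Nonempty ∧ H₂.Nonempty ∧ Disjoint H₁ H₂ ∧
      Λ.Hereditary H₁ ∧ Λ.Saturated H₁ ∧ Λ.Hereditary H₂ ∧ Λ.Saturated H₂ ∧
      ∀ v : Λ.Path, Λ.IsVertex v → v ∉ H₁ ∪ H₂ →
        ∃ n : Fin k → ℕ, ∀ lam ∈ Λ.boundedPaths n, Λ.r lam = v →
          Λ.s lam ∈ H₁ ∪ H₂) ↔
    (∃ H : Set Λ.Path, (∀ v ∈ H, Λ.IsVertex v) ∧ H.Nonempty ∧
      Λ.Hereditary H ∧ Λ.Saturated H ∧ Λ.Succ {v | Λ.IsVertex v} H) := by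
  constructor
  · rintro ⟨H₁, H₂, hv₁, hv₂, hne₁, hne₂, hdisj, hher₁, -, hher₂, hsat₂, hcover⟩
    have hΔ : H₁ ⊆ Λ.Delta {v | Λ.IsVertex v} H₂ :=
      KGraph.subset_delta_of_disjoint hv₁ hher₁ hdisj
    refine ⟨H₂, hv₂, hne₂, hher₂, hsat₂, hv₂, hne₁.mono hΔ, ?_⟩
    rintro v ⟨⟨hv, hvH₂⟩, hreach⟩
    have hvH₁ : v ∉ H₁ := fun h => hreach.ne_empty (hΔ h).2
    obtain ⟨n, hn⟩ := hcover v hv fun h => h.elim hvH₁ hvH₂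
    exact ⟨n, fun lam hlam hr => (hn lam hlam hr).elim (fun h => .inr (hΔ h)) .inl⟩
  · rintro ⟨H, hvH, hneH, hherH, hsatH, -, hΔne, hΩ⟩
    refine ⟨Λ.Delta {v | Λ.IsVertex v} H, H, fun v hv => hv.1, hvH, hΔne, hneH,
      KGraph.disjoint_delta fun _ hv => hv,
      KGraph.hereditary_delta KGraph.hereditary_setOf_isVertex,
      KGraph.saturated_delta hlc KGraph.saturated_setOf_isVertex hherH, hherH, hsatH,
      fun v hv hnot => ?_⟩
    obtain ⟨n, hn⟩ := hΩ v (KGraph.mem_omega_of_notMem_union hv hnot)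
    exact ⟨n, fun lam hlam hr => (hn lam hlam hr).symm⟩

/-- Theorem 6.6, (2) ⇔ (3): For a locally convex row-finite
`k`-graph `Λ`, the following are equivalent:
(2) there exist nonempty disjoint saturated hereditary `H₁, H₂ ⊆ Λ^0` such
that every `v ∈ Λ^0 \ (H₁ ∪ H₂)` has some `n ∈ ℕ^k` with
`s(vΛ^{≤n}) ⊆ H₁ ∪ H₂`;
(3) there exists a nonempty saturated hereditary `H ⊆ Λ^0` with `Λ^0 ≻ H`. -/
theorem statement11 {k : ℕ} (Λ : KGraph k) (hlc : Λ.LocallyConvex)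
    (hrf : Λ.RowFinite) :
    (∃ H₁ H₂ : Set Λ.Path,
      (∀ v ∈ H₁, Λ.IsVertex v) ∧ (∀ v ∈ H₂, Λ.IsVertex v) ∧
      H₁.Nonempty ∧ H₂.Nonempty ∧ Disjoint H₁ H₂ ∧
      Λ.Hereditary H₁ ∧ Λ.Saturated H₁ ∧ Λ.Hereditary H₂ ∧ Λ.Saturated H₂ ∧
      ∀ v : Λ.Path, Λ.IsVertex v → v ∉ H₁ ∪ H₂ →
        ∃ n : Fin k → ℕ, ∀ lam ∈ Λ.boundedPaths n, Λ.r lam = v →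
          Λ.s lam ∈ H₁ ∪ H₂) ↔
    (∃ H : Set Λ.Path, (∀ v ∈ H, Λ.IsVertex v) ∧ H.Nonempty ∧
      Λ.Hereditary H ∧ Λ.Saturated H ∧ Λ.Succ {v | Λ.IsVertex v} H) :=
  statement11_general Λ hlc
end
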